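/- arXiv:2101.09519 — 2 statements merged into one kernel-verified Lean document; each statement's English description precedes it below -/
import Mathlib

section
/- Assume (ii) |f(t,u,v)| ≤ M for all (t,u,v) ∈ D_M; (iii) f satisfies the Lipschitz conditions |f(t,u2,v2) − f(t,u1,v1)| ≤ L1|u2 − u1| + L2|v2 − v1| for all (t,u1,v1), (t,u2,v2) ∈ D_M with constants L1, L2 ≥ 0; and (iv) q := (L1 + L2) M0 < 1, where here M0 = max_{t∈[0,1]} ∫₀¹ |G(t,s)| ds, and the domain D_M is taken with a = 1 and this g and M0. Then there exists exactly one three times continuously differentiable function u: [0,1] → ℝ satisfying u'''(t) = f(t, u(t), u(φ(t))) for all t ∈ [0,1], the boundary conditions u(0) = b1, u'(0) = b2, u'(1) = b3, and the bound |u(t)| ≤ ‖g‖ + M0 M for all t ∈ [0,1]. -/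
open Set MeasureTheory

/-- The Green function of the problem `u''' = ψ`, `u(0) = u'(0) = u'(1) = 0` on `[0,1]`. -/
noncomputable def G01 (t s : ℝ) : ℝ :=
  if s ≤ t then s / 2 * (t ^ 2 - 2 * t + s) else t ^ 2 / 2 * (s - 1)

/-- The quadratic polynomial with `g(0) = b1`, `g'(0) = b2`, `g'(1) = b3`. -/
noncomputable def gq (b1 b2 b3 t : ℝ) : ℝ := b1 + b2 * t + (b3 - b2) / 2 * t ^ 2

/-!
Write `R = ‖g‖ + M0 M`. The Green integral `g + ∫₀¹ G(·, s) F(s) ds` solves `u''' = F` with the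
boundary conditions, and it is the only solution, since `w''' = 0`, `w(0) = w'(0) = w'(1) = 0`
forces `w = 0`. Hence the solutions bounded by `R` are the fixed points of
`u ↦ g + ∫₀¹ G(·, s) f(s, u(s), u(φ s)) ds` on `C([0, 1])` with values in `[-R, R]`. Clipping
the values of `u` to `[-R, R]` inside `f` turns this into a self-map of all of `C([0, 1])`, which
by (iii) is a contraction for the sup norm with constant `(L1 + L2) M0 < 1`. By (ii) its fixed
point is bounded by `R`, so the clipping is inactive there.
-/

open intervalIntegral

theorem derivWithin_eqOn_of_hasDerivAt {s : Set ℝ} (hs : UniqueDiffOn ℝ s)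
    {g v v' : ℝ → ℝ} (hgv : EqOn g v s) (hv : ∀ t, HasDerivAt v (v' t) t) :
    EqOn (derivWithin g s) v' s := fun t ht =>
  (derivWithin_congr hgv (hgv ht)).trans ((hv t).hasDerivWithinAt.derivWithin (hs t ht))

theorem contDiff_three_of_hasDerivAt {u u₁ u₂ u₃ : ℝ → ℝ} (h₁ : ∀ t, HasDerivAt u (u₁ t) t)
    (h₂ : ∀ t, HasDerivAt u₁ (u₂ t) t) (h₃ : ∀ t, HasDerivAt u₂ (u₃ t) t)
    (hu₃ : Continuous u₃) : ContDiff ℝ 3 u := by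
  have hu₂ : ContDiff ℝ 1 u₂ := contDiff_one_iff_deriv.2
    ⟨fun t => (h₃ t).differentiableAt, by rwa [funext fun t => (h₃ t).deriv]⟩
  have hu₁ : ContDiff ℝ (1 + 1) u₁ := contDiff_succ_iff_deriv.2
    ⟨fun t => (h₂ t).differentiableAt, by simp, by rwa [funext fun t => (h₂ t).deriv]⟩
  show ContDiff ℝ (2 + 1) u
  exact contDiff_succ_iff_deriv.2
    ⟨fun t => (h₁ t).differentiableAt, by simp, by rwa [funext fun t => (h₁ t).deriv]⟩

theorem eqOn_of_derivWithin_three_eq {a b : ℝ} (hab : a < b) {v p : ℝ → ℝ}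
    (hv : ContDiffOn ℝ 3 v (Icc a b)) (hp : ContDiffOn ℝ 3 p (Icc a b))
    (h₃ : EqOn (derivWithin (derivWithin (derivWithin v (Icc a b)) (Icc a b)) (Icc a b))
      (derivWithin (derivWithin (derivWithin p (Icc a b)) (Icc a b)) (Icc a b)) (Icc a b))
    (h₀ : v a = p a) (ha : derivWithin v (Icc a b) a = derivWithin p (Icc a b) a)
    (hb : derivWithin v (Icc a b) b = derivWithin p (Icc a b) b) : EqOn v p (Icc a b) := by
  set I := Icc a b
  have hI : UniqueDiffOn ℝ I := uniqueDiffOn_Icc hab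
  have hv₁ : ContDiffOn ℝ 2 (derivWithin v I) I := hv.derivWithin hI (by norm_num)
  have hp₁ : ContDiffOn ℝ 2 (derivWithin p I) I := hp.derivWithin hI (by norm_num)
  have hv₂ : ContDiffOn ℝ 1 (derivWithin (derivWithin v I) I) I := hv₁.derivWithin hI (by norm_num)
  have hp₂ : ContDiffOn ℝ 1 (derivWithin (derivWithin p I) I) I := hp₁.derivWithin hI (by norm_num)
  set c := derivWithin (derivWithin v I) I a - derivWithin (derivWithin p I) I a
  have h₂ : ∀ t ∈ I, derivWithin (derivWithin v I) I t = derivWithin (derivWithin p I) I t + c :=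
    eq_of_derivWithin_eq (hv₂.differentiableOn one_ne_zero)
      ((hp₂.differentiableOn one_ne_zero).add_const c)
      (fun x hx => by rw [derivWithin_add_const]; exact h₃ (Ico_subset_Icc_self hx)) (by ring)
  have hlin : ∀ x ∈ I, HasDerivWithinAt (fun t => derivWithin p I t + c * (t - a))
      (derivWithin (derivWithin p I) I x + c) I x := fun x hx =>
    ((hp₁.differentiableOn two_ne_zero x hx).hasDerivWithinAt.add
      (((hasDerivAt_id x).sub_const a).const_mul c).hasDerivWithinAt).congr_deriv (by ring)
  have h₁ : ∀ t ∈ I, derivWithin v I t = derivWithin p I t + c * (t - a) :=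
    eq_of_derivWithin_eq (hv₁.differentiableOn two_ne_zero)
      (fun x hx => (hlin x hx).differentiableWithinAt)
      (fun x hx => by
        rw [(hlin x (Ico_subset_Icc_self hx)).derivWithin (hI x (Ico_subset_Icc_self hx)),
          h₂ x (Ico_subset_Icc_self hx)])
      (by simp [ha])
  have hc : c = 0 := by
    have := h₁ b (right_mem_Icc.2 hab.le)
    rw [hb, left_eq_add, mul_eq_zero] at this
    exact this.resolve_right (sub_ne_zero.2 hab.ne')
  exact eq_of_derivWithin_eq (hv.differentiableOn (by norm_num)) (hp.differentiableOn (by norm_num))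
    (fun x hx => by simpa [hc] using h₁ x (Ico_subset_Icc_self hx)) h₀

theorem continuous_G01 (t : ℝ) : Continuous (G01 t) :=
  Continuous.if_le (by fun_prop) (by fun_prop) continuous_id continuous_const
    fun s hs => by rw [hs]; ring

theorem Continuous.hasDerivAt_integral_left {k : ℝ → ℝ} (hk : Continuous k) (b t : ℝ) :
    HasDerivAt (fun t => ∫ s in t..b, k s) (-k t) t :=
  integral_hasDerivAt_left (hk.intervalIntegrable _ _) (hk.stronglyMeasurableAtFilter _ _)
    hk.continuousAt

theorem Continuous.hasDerivAt_integral_right {k : ℝ → ℝ} (hk : Continuous k) (a t : ℝ) :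
    HasDerivAt (fun t => ∫ s in a..t, k s) (k t) t :=
  (hk.integral_hasStrictDerivAt a t).hasDerivAt

/-- `∫₀¹ G01 t s F s ds`, written so that it is visibly differentiable in `t`. -/
noncomputable def greenInt (F : ℝ → ℝ) (t : ℝ) : ℝ :=
  (t ^ 2 - 2 * t) / 2 * (∫ s in 0..t, s * F s) + (∫ s in 0..t, s ^ 2 * F s) / 2
    + t ^ 2 / 2 * ∫ s in t..1, (s - 1) * F s

noncomputable def greenIntDeriv (F : ℝ → ℝ) (t : ℝ) : ℝ :=
  (t - 1) * (∫ s in 0..t, s * F s) + t * ∫ s in t..1, (s - 1) * F s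

noncomputable def greenIntDeriv2 (F : ℝ → ℝ) (t : ℝ) : ℝ :=
  (∫ s in 0..t, s * F s) + ∫ s in t..1, (s - 1) * F s

section Green

variable {F : ℝ → ℝ}

theorem hasDerivAt_integral_mul_id (hF : Continuous F) (t : ℝ) :
    HasDerivAt (fun t => ∫ s in 0..t, s * F s) (t * F t) t :=
  Continuous.hasDerivAt_integral_right (by fun_prop) 0 t

theorem hasDerivAt_integral_mul_sub_one (hF : Continuous F) (t : ℝ) :
    HasDerivAt (fun t => ∫ s in t..1, (s - 1) * F s) (-((t - 1) * F t)) t :=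
  Continuous.hasDerivAt_integral_left (by fun_prop) 1 t

theorem hasDerivAt_greenInt (hF : Continuous F) (t : ℝ) :
    HasDerivAt (greenInt F) (greenIntDeriv F t) t := by
  have hB : HasDerivAt (fun t => ∫ s in 0..t, s ^ 2 * F s) (t ^ 2 * F t) t :=
    Continuous.hasDerivAt_integral_right (by fun_prop) 0 t
  refine ((((hasDerivAt_id' t).fun_pow 2).fun_sub ((hasDerivAt_id' t).const_mul 2)).div_const 2
      |>.fun_mul (hasDerivAt_integral_mul_id hF t)).fun_add (hB.div_const 2)
    |>.fun_add ((((hasDerivAt_id' t).fun_pow 2).div_const 2).fun_mul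
      (hasDerivAt_integral_mul_sub_one hF t)) |>.congr_deriv ?_
  simp only [greenIntDeriv]
  ring

theorem hasDerivAt_greenIntDeriv (hF : Continuous F) (t : ℝ) :
    HasDerivAt (greenIntDeriv F) (greenIntDeriv2 F t) t := by
  refine (((hasDerivAt_id' t).sub_const 1).fun_mul (hasDerivAt_integral_mul_id hF t)).fun_add
    ((hasDerivAt_id' t).fun_mul (hasDerivAt_integral_mul_sub_one hF t)) |>.congr_deriv ?_
  simp only [greenIntDeriv2]
  ring

theorem hasDerivAt_greenIntDeriv2 (hF : Continuous F) (t : ℝ) :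
    HasDerivAt (greenIntDeriv2 F) (F t) t :=
  (hasDerivAt_integral_mul_id hF t).fun_add (hasDerivAt_integral_mul_sub_one hF t)
    |>.congr_deriv (by ring)

theorem greenInt_zero : greenInt F 0 = 0 := by simp [greenInt]

theorem greenIntDeriv_zero : greenIntDeriv F 0 = 0 := by simp [greenIntDeriv]

theorem greenIntDeriv_one : greenIntDeriv F 1 = 0 := by simp [greenIntDeriv]

theorem greenInt_eq_integral (hF : Continuous F) {t : ℝ} (ht : t ∈ Icc (0:ℝ) 1) :
    greenInt F t = ∫ s in 0..1, G01 t s * F s := by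
  have hint : ∀ a b, IntervalIntegrable (fun s => G01 t s * F s) volume a b := fun a b =>
    ((continuous_G01 t).mul hF).intervalIntegrable a b
  have hleft : ∫ s in 0..t, G01 t s * F s
      = ∫ s in 0..t, ((t ^ 2 - 2 * t) / 2 * (s * F s) + (s ^ 2 * F s) / 2) := by
    refine integral_congr fun s hs => ?_
    rw [uIcc_of_le ht.1] at hs
    simp only [G01, if_pos hs.2]
    ring
  have hright : ∫ s in t..1, G01 t s * F s = ∫ s in t..1, t ^ 2 / 2 * ((s - 1) * F s) := by
    refine integral_congr fun s hs => ?_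
    rw [uIcc_of_le ht.2] at hs
    rcases hs.1.lt_or_eq with hts | rfl
    · simp only [G01, if_neg (not_le.2 hts)]
      ring
    · simp only [G01, le_refl, if_true]
      ring
  rw [← integral_add_adjacent_intervals (hint 0 t) (hint t 1), hleft, hright,
    integral_add ((Continuous.intervalIntegrable (by fun_prop) _ _))
      ((Continuous.intervalIntegrable (by fun_prop) _ _)),
    intervalIntegral.integral_const_mul, intervalIntegral.integral_div,
    intervalIntegral.integral_const_mul, greenInt]

theorem abs_intervalIntegral_mul_le {a b K : ℝ} (hab : a ≤ b) {k : ℝ → ℝ} (hk : Continuous k)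
    (hF : Continuous F) (hK : ∀ s ∈ Icc a b, |F s| ≤ K) :
    |∫ s in a..b, k s * F s| ≤ (∫ s in a..b, |k s|) * K := by
  rw [← intervalIntegral.integral_mul_const]
  refine (intervalIntegral.abs_integral_le_integral_abs hab).trans (integral_mono_on hab
    ((hk.mul hF).abs.intervalIntegrable a b) ((hk.abs.mul continuous_const).intervalIntegrable a b)
    fun s hs => ?_)
  rw [abs_mul]
  exact mul_le_mul_of_nonneg_left (hK s hs) (abs_nonneg _)

end Green

noncomputable def bvpSol (b1 b2 b3 : ℝ) (F : ℝ → ℝ) (t : ℝ) : ℝ := gq b1 b2 b3 t + greenInt F t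

section BVP

variable (b1 b2 b3 : ℝ) {F : ℝ → ℝ}

theorem bvpSol_spec (hF : Continuous F) :
    ContDiff ℝ 3 (bvpSol b1 b2 b3 F) ∧
      (∀ t ∈ Icc (0:ℝ) 1, derivWithin (derivWithin (derivWithin (bvpSol b1 b2 b3 F)
        (Icc 0 1)) (Icc 0 1)) (Icc 0 1) t = F t) ∧
      bvpSol b1 b2 b3 F 0 = b1 ∧ derivWithin (bvpSol b1 b2 b3 F) (Icc 0 1) 0 = b2 ∧
      derivWithin (bvpSol b1 b2 b3 F) (Icc 0 1) 1 = b3 := by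
  have h₁ : ∀ t, HasDerivAt (bvpSol b1 b2 b3 F) (b2 + (b3 - b2) * t + greenIntDeriv F t) t :=
    fun t => (((hasDerivAt_id' t).const_mul b2).const_add b1 |>.fun_add
      (((hasDerivAt_id' t).fun_pow 2).const_mul ((b3 - b2) / 2))).fun_add
      (hasDerivAt_greenInt hF t) |>.congr_deriv (by ring)
  have h₂ : ∀ t, HasDerivAt (fun t => b2 + (b3 - b2) * t + greenIntDeriv F t)
      (b3 - b2 + greenIntDeriv2 F t) t := fun t =>
    (((hasDerivAt_id' t).const_mul (b3 - b2)).const_add b2).fun_add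
      (hasDerivAt_greenIntDeriv hF t) |>.congr_deriv (by ring)
  have h₃ : ∀ t, HasDerivAt (fun t => b3 - b2 + greenIntDeriv2 F t) (F t) t := fun t =>
    (hasDerivAt_greenIntDeriv2 hF t).const_add (b3 - b2)
  have hI : UniqueDiffOn ℝ (Icc (0:ℝ) 1) := uniqueDiffOn_Icc zero_lt_one
  have d₁ := derivWithin_eqOn_of_hasDerivAt hI (eqOn_refl _ _) h₁
  have d₃ := derivWithin_eqOn_of_hasDerivAt hI (derivWithin_eqOn_of_hasDerivAt hI d₁ h₂) h₃
  refine ⟨contDiff_three_of_hasDerivAt h₁ h₂ h₃ hF, d₃, by simp [bvpSol, gq, greenInt_zero], ?_, ?_⟩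
  · rw [d₁ (left_mem_Icc.2 zero_le_one)]
    simp only [greenIntDeriv_zero]
    ring
  · rw [d₁ (right_mem_Icc.2 zero_le_one)]
    simp only [greenIntDeriv_one]
    ring

theorem eqOn_bvpSol (hF : Continuous F) {v : ℝ → ℝ} (hv : ContDiffOn ℝ 3 v (Icc 0 1))
    (hv₃ : ∀ t ∈ Icc (0:ℝ) 1,
      derivWithin (derivWithin (derivWithin v (Icc 0 1)) (Icc 0 1)) (Icc 0 1) t = F t)
    (hv₀ : v 0 = b1) (hv₀' : derivWithin v (Icc 0 1) 0 = b2)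
    (hv₁' : derivWithin v (Icc 0 1) 1 = b3) : EqOn v (bvpSol b1 b2 b3 F) (Icc 0 1) := by
  obtain ⟨hp, hp₃, hp₀, hp₀', hp₁'⟩ := bvpSol_spec b1 b2 b3 hF
  exact eqOn_of_derivWithin_three_eq zero_lt_one hv hp.contDiffOn
    (fun t ht => (hv₃ t ht).trans (hp₃ t ht).symm) (hv₀.trans hp₀.symm)
    (hv₀'.trans hp₀'.symm) (hv₁'.trans hp₁'.symm)

theorem abs_bvpSol_le (hF : Continuous F) {ng M0 M : ℝ}
    (hg : ∀ t ∈ Icc (0:ℝ) 1, |gq b1 b2 b3 t| ≤ ng)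
    (hG : ∀ t ∈ Icc (0:ℝ) 1, ∫ s in (0:ℝ)..1, |G01 t s| ≤ M0) (hFM : ∀ s ∈ Icc (0:ℝ) 1, |F s| ≤ M)
    {t : ℝ} (ht : t ∈ Icc (0:ℝ) 1) : |bvpSol b1 b2 b3 F t| ≤ ng + M0 * M := by
  have hM : 0 ≤ M := (abs_nonneg _).trans (hFM 0 (left_mem_Icc.2 zero_le_one))
  have hgreen : |greenInt F t| ≤ M0 * M := by
    rw [greenInt_eq_integral hF ht]
    exact (abs_intervalIntegral_mul_le zero_le_one (continuous_G01 t) hF hFM).trans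
      (mul_le_mul_of_nonneg_right (hG t ht) hM)
  exact (abs_add_le _ _).trans (add_le_add (hg t ht) hgreen)

noncomputable def bvpSolMap (F : C(ℝ, ℝ)) : C(Icc (0:ℝ) 1, ℝ) :=
  (⟨bvpSol b1 b2 b3 F, (bvpSol_spec b1 b2 b3 F.continuous).1.continuous⟩ : C(ℝ, ℝ)).restrict _

theorem dist_bvpSolMap_le {M0 K : ℝ} (hG : ∀ t ∈ Icc (0:ℝ) 1, ∫ s in (0:ℝ)..1, |G01 t s| ≤ M0)
    {F F' : C(ℝ, ℝ)} (hK : ∀ s ∈ Icc (0:ℝ) 1, |F s - F' s| ≤ K) :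
    dist (bvpSolMap b1 b2 b3 F) (bvpSolMap b1 b2 b3 F') ≤ M0 * K := by
  have h0 : (0:ℝ) ∈ Icc 0 1 := left_mem_Icc.2 zero_le_one
  have hM0 : 0 ≤ M0 :=
    (integral_nonneg zero_le_one fun _ _ => abs_nonneg _).trans (hG 0 h0)
  have hK0 : 0 ≤ K := (abs_nonneg _).trans (hK 0 h0)
  refine (ContinuousMap.dist_le (mul_nonneg hM0 hK0)).2 fun ⟨t, ht⟩ => ?_
  have hsub : greenInt F t - greenInt F' t = ∫ s in (0:ℝ)..1, G01 t s * (F s - F' s) := by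
    rw [greenInt_eq_integral F.continuous ht, greenInt_eq_integral F'.continuous ht]
    simp only [mul_sub]
    exact (integral_sub (((continuous_G01 t).mul F.continuous).intervalIntegrable _ _)
      (((continuous_G01 t).mul F'.continuous).intervalIntegrable _ _)).symm
  calc dist (bvpSolMap b1 b2 b3 F ⟨t, ht⟩) (bvpSolMap b1 b2 b3 F' ⟨t, ht⟩)
      = |∫ s in (0:ℝ)..1, G01 t s * (F s - F' s)| := by
        rw [Real.dist_eq, ← hsub]
        simp only [bvpSolMap, ContinuousMap.restrict_apply, ContinuousMap.coe_mk, bvpSol]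
        ring_nf
    _ ≤ M0 * K := (abs_intervalIntegral_mul_le zero_le_one (continuous_G01 t)
          (F.continuous.sub F'.continuous) hK).trans (mul_le_mul_of_nonneg_right (hG t ht) hK0)

end BVP

section Clipped

variable {f : ℝ → ℝ → ℝ → ℝ} {φ : ℝ → ℝ} {R : ℝ}
  (hfc : ContinuousOn (fun p : ℝ × ℝ × ℝ => f p.1 p.2.1 p.2.2)
    (Icc 0 1 ×ˢ (univ : Set ℝ) ×ˢ (univ : Set ℝ)))
  (hφc : ContinuousOn φ (Icc 0 1)) (hφm : MapsTo φ (Icc 0 1) (Icc 0 1)) (hR : 0 ≤ R)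

noncomputable def clip (x : ℝ) : ℝ := projIcc (-R) R (neg_le_self hR) x

theorem continuous_clip : Continuous (clip hR) := continuous_subtype_val.comp continuous_projIcc

noncomputable def clippedRhs (u : C(Icc (0:ℝ) 1, ℝ)) : C(ℝ, ℝ) where
  toFun := IccExtend zero_le_one fun x => f x (clip hR (u x)) (clip hR (u (hφm.restrict φ _ _ x)))
  continuous_toFun := by
    have hg : Continuous fun x : Icc (0:ℝ) 1 =>
        ((x : ℝ), clip hR (u x), clip hR (u (hφm.restrict φ _ _ x))) :=
      continuous_subtype_val.prodMk (((continuous_clip hR).comp u.continuous).prodMk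
        ((continuous_clip hR).comp (u.continuous.comp (hφc.mapsToRestrict hφm))))
    exact continuous_IccExtend_iff.2 (hfc.comp_continuous hg fun x => ⟨x.2, trivial, trivial⟩)

theorem abs_clip_le (x : ℝ) : |clip hR x| ≤ R := abs_le.2 (projIcc (-R) R (neg_le_self hR) x).2

theorem clip_of_abs_le {x : ℝ} (hx : |x| ≤ R) : clip hR x = x := by
  rw [clip, projIcc_of_mem _ (abs_le.1 hx)]

theorem abs_clip_sub_clip_le (x y : ℝ) : |clip hR x - clip hR y| ≤ |x - y| :=
  abs_projIcc_sub_projIcc _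

theorem abs_clippedRhs_le {M : ℝ}
    (hbound : ∀ t ∈ Icc (0:ℝ) 1, ∀ u v : ℝ, |u| ≤ R → |v| ≤ R → |f t u v| ≤ M)
    (u : C(Icc (0:ℝ) 1, ℝ)) (s : ℝ) : |clippedRhs hfc hφc hφm hR u s| ≤ M :=
  hbound _ (projIcc 0 1 zero_le_one s).2 _ _ (abs_clip_le hR _) (abs_clip_le hR _)

theorem abs_clippedRhs_sub_le {L1 L2 : ℝ} (hL1 : 0 ≤ L1) (hL2 : 0 ≤ L2)
    (hLip : ∀ t ∈ Icc (0:ℝ) 1, ∀ u1 u2 v1 v2 : ℝ, |u1| ≤ R → |u2| ≤ R → |v1| ≤ R → |v2| ≤ R →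
      |f t u2 v2 - f t u1 v1| ≤ L1 * |u2 - u1| + L2 * |v2 - v1|)
    (u v : C(Icc (0:ℝ) 1, ℝ)) (s : ℝ) :
    |clippedRhs hfc hφc hφm hR u s - clippedRhs hfc hφc hφm hR v s| ≤ (L1 + L2) * dist u v := by
  set x := projIcc (0:ℝ) 1 zero_le_one s
  have hclip : ∀ y, |clip hR (u y) - clip hR (v y)| ≤ dist u v := fun y =>
    (abs_clip_sub_clip_le hR _ _).trans (by rw [← Real.dist_eq]; exact u.dist_apply_le_dist y)
  calc _ ≤ L1 * |clip hR (u x) - clip hR (v x)|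
        + L2 * |clip hR (u (hφm.restrict φ _ _ x)) - clip hR (v (hφm.restrict φ _ _ x))| :=
        hLip x x.2 _ _ _ _ (abs_clip_le hR _) (abs_clip_le hR _) (abs_clip_le hR _)
          (abs_clip_le hR _)
    _ ≤ L1 * dist u v + L2 * dist u v := by gcongr <;> exact hclip _
    _ = (L1 + L2) * dist u v := by ring

theorem clippedRhs_apply_of_abs_le {u : C(Icc (0:ℝ) 1, ℝ)} {v : ℝ → ℝ} (huv : ∀ x, u x = v x)
    (hv : ∀ t ∈ Icc (0:ℝ) 1, |v t| ≤ R) {t : ℝ} (ht : t ∈ Icc (0:ℝ) 1) :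
    clippedRhs hfc hφc hφm hR u t = f t (v t) (v (φ t)) := by
  simp only [clippedRhs, ContinuousMap.coe_mk, IccExtend_of_mem _ _ ht, MapsTo.restrict,
    Subtype.map, huv, clip_of_abs_le hR (hv _ ht), clip_of_abs_le hR (hv _ (hφm ht))]

theorem isFixedPt_bvpSolMap_clippedRhs (b1 b2 b3 : ℝ) {v : ℝ → ℝ}
    (hv : ContDiffOn ℝ 3 v (Icc 0 1))
    (hv₃ : ∀ t ∈ Icc (0:ℝ) 1, derivWithin (derivWithin (derivWithin v (Icc 0 1)) (Icc 0 1))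
      (Icc 0 1) t = f t (v t) (v (φ t)))
    (hv₀ : v 0 = b1) (hv₀' : derivWithin v (Icc 0 1) 0 = b2)
    (hv₁' : derivWithin v (Icc 0 1) 1 = b3) (hv_bound : ∀ t ∈ Icc (0:ℝ) 1, |v t| ≤ R) :
    Function.IsFixedPt (fun w => bvpSolMap b1 b2 b3 (clippedRhs hfc hφc hφm hR w))
      ⟨(Icc 0 1).domRestrict v, hv.continuousOn.domRestrict⟩ := by
  refine ContinuousMap.ext fun x => (eqOn_bvpSol b1 b2 b3
    (clippedRhs hfc hφc hφm hR _).continuous hv (fun t ht => ?_) hv₀ hv₀' hv₁' x.2).symm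
  exact (hv₃ t ht).trans
    (clippedRhs_apply_of_abs_le hfc hφc hφm hR (fun _ => rfl) hv_bound ht).symm

end Clipped

/-- Under the assumptions (ii) `|f| ≤ M` on `D_M`, (iii) the Lipschitz conditions on `D_M`, and
(iv) `q = (L1+L2) M0 < 1`, the boundary value problem `u''' = f(t, u(t), u(φ(t)))`,
`u(0) = b1`, `u'(0) = b2`, `u'(1) = b3` has exactly one three times continuously differentiable
solution on `[0,1]`, and it satisfies `|u(t)| ≤ ‖g‖ + M0 M` on `[0,1]`. -/
theorem existence_uniqueness_third_order_fde
    (b1 b2 b3 : ℝ) (φ : ℝ → ℝ) (f : ℝ → ℝ → ℝ → ℝ)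
    (hφc : ContinuousOn φ (Icc 0 1)) (hφm : MapsTo φ (Icc 0 1) (Icc 0 1))
    (hfc : ContinuousOn (fun p : ℝ × ℝ × ℝ => f p.1 p.2.1 p.2.2)
      (Icc 0 1 ×ˢ (univ : Set ℝ) ×ˢ (univ : Set ℝ)))
    (M0 : ℝ) (hM0 : IsGreatest ((fun t => ∫ s in (0:ℝ)..1, |G01 t s|) '' Icc 0 1) M0)
    (ng : ℝ) (hng : IsGreatest ((fun t => |gq b1 b2 b3 t|) '' Icc 0 1) ng)
    (M : ℝ) (hM : 0 < M)
    (hbound : ∀ t ∈ Icc (0:ℝ) 1, ∀ u v : ℝ,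
      |u| ≤ ng + M0 * M → |v| ≤ ng + M0 * M → |f t u v| ≤ M)
    (L1 L2 : ℝ) (hL1 : 0 ≤ L1) (hL2 : 0 ≤ L2)
    (hLip : ∀ t ∈ Icc (0:ℝ) 1, ∀ u1 u2 v1 v2 : ℝ,
      |u1| ≤ ng + M0 * M → |u2| ≤ ng + M0 * M →
      |v1| ≤ ng + M0 * M → |v2| ≤ ng + M0 * M →
      |f t u2 v2 - f t u1 v1| ≤ L1 * |u2 - u1| + L2 * |v2 - v1|)
    (hq : (L1 + L2) * M0 < 1) :
    ∃ u : ℝ → ℝ,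
      (ContDiffOn ℝ 3 u (Icc 0 1) ∧
        (∀ t ∈ Icc (0:ℝ) 1,
          derivWithin (derivWithin (derivWithin u (Icc 0 1)) (Icc 0 1)) (Icc 0 1) t
            = f t (u t) (u (φ t))) ∧
        u 0 = b1 ∧ derivWithin u (Icc 0 1) 0 = b2 ∧ derivWithin u (Icc 0 1) 1 = b3 ∧
        (∀ t ∈ Icc (0:ℝ) 1, |u t| ≤ ng + M0 * M)) ∧
      ∀ u2 : ℝ → ℝ,
        (ContDiffOn ℝ 3 u2 (Icc 0 1) ∧
          (∀ t ∈ Icc (0:ℝ) 1,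
            derivWithin (derivWithin (derivWithin u2 (Icc 0 1)) (Icc 0 1)) (Icc 0 1) t
              = f t (u2 t) (u2 (φ t))) ∧
          u2 0 = b1 ∧ derivWithin u2 (Icc 0 1) 0 = b2 ∧ derivWithin u2 (Icc 0 1) 1 = b3 ∧
          (∀ t ∈ Icc (0:ℝ) 1, |u2 t| ≤ ng + M0 * M)) →
        EqOn u2 u (Icc 0 1) := by
  have hG : ∀ t ∈ Icc (0:ℝ) 1, ∫ s in (0:ℝ)..1, |G01 t s| ≤ M0 := fun t ht =>
    hM0.2 ⟨t, ht, rfl⟩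
  have hg : ∀ t ∈ Icc (0:ℝ) 1, |gq b1 b2 b3 t| ≤ ng := fun t ht => hng.2 ⟨t, ht, rfl⟩
  have hM0_nonneg : 0 ≤ M0 := by
    obtain ⟨t, -, rfl⟩ := hM0.1
    exact integral_nonneg zero_le_one fun _ _ => abs_nonneg _
  have hR : 0 ≤ ng + M0 * M := add_nonneg ((abs_nonneg _).trans (hg 0 (left_mem_Icc.2 zero_le_one)))
    (mul_nonneg hM0_nonneg hM.le)
  set F := clippedRhs hfc hφc hφm hR
  set T := fun w => bvpSolMap b1 b2 b3 (F w)
  have hT : ContractingWith ⟨(L1 + L2) * M0, mul_nonneg (add_nonneg hL1 hL2) hM0_nonneg⟩ T :=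
    ⟨hq, LipschitzWith.of_dist_le_mul fun w w' => (dist_bvpSolMap_le b1 b2 b3 hG fun s _ =>
      abs_clippedRhs_sub_le hfc hφc hφm hR hL1 hL2 hLip w w' s).trans_eq
        (by change _ = (L1 + L2) * M0 * _; ring)⟩
  set w₀ := ContractingWith.fixedPoint T hT
  set u := bvpSol b1 b2 b3 (F w₀)
  have hw₀u : ∀ x, w₀ x = u x := fun x => (DFunLike.congr_fun hT.fixedPoint_isFixedPt x).symm
  have hu_bound : ∀ t ∈ Icc (0:ℝ) 1, |u t| ≤ ng + M0 * M := fun t ht =>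
    abs_bvpSol_le b1 b2 b3 (F w₀).continuous hg hG
      (fun s _ => abs_clippedRhs_le hfc hφc hφm hR hbound w₀ s) ht
  obtain ⟨hu, hu₃, hu₀, hu₀', hu₁'⟩ := bvpSol_spec b1 b2 b3 (F w₀).continuous
  refine ⟨u, ⟨hu.contDiffOn, fun t ht => (hu₃ t ht).trans
    (clippedRhs_apply_of_abs_le hfc hφc hφm hR hw₀u hu_bound ht), hu₀, hu₀', hu₁', hu_bound⟩, ?_⟩
  rintro v ⟨hv, hv₃, hv₀, hv₀', hv₁', hv_bound⟩ t ht
  have hv_fixed := hT.fixedPoint_unique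
    (isFixedPt_bvpSolMap_clippedRhs hfc hφc hφm hR b1 b2 b3 hv hv₃ hv₀ hv₀' hv₁' hv_bound)
  exact (DFunLike.congr_fun hv_fixed ⟨t, ht⟩).trans (hw₀u _)
end

section
/- Let ψ: [0,1] → ℝ be twice continuously differentiable. Then there exists a constant C > 0 such that for every integer N ≥ 1, with h = 1/N, grid points s_j = j h, and trapezoidal weights ρ_0 = ρ_N = 1/2 and ρ_j = 1 for 1 ≤ j ≤ N − 1, one has for every ξ ∈ [0,1]: |∫₀¹ |G(ξ, s)| ψ(s) ds − Σ_{j=0}^{N} h ρ_j |G(ξ, s_j)| ψ(s_j)| ≤ C h². In particular (taking ψ ≡ 1), Σ_{j=0}^{N} h ρ_j |G(ξ, s_j)| ≤ max_{t∈[0,1]} ∫₀¹ |G(t,s)| ds + C h² for all ξ ∈ [0,1] and N ≥ 1. -/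
open Set MeasureTheory

/-- Trapezoidal weights: `ρ_0 = ρ_N = 1/2` and `ρ_j = 1` for `1 ≤ j ≤ N − 1`. -/
noncomputable def trapWeight (N j : ℕ) : ℝ := if j = 0 ∨ j = N then 1 / 2 else 1

open scoped NNReal

/-! On the unit square `G01 ≤ 0`, so `s ↦ |G01 t s| = -G01 t s` is `C¹` with a piecewise linear,
`1`-Lipschitz derivative; it has a kink at `s = t`, so it is not `C²` and the classical error bound
for the trapezoidal rule does not apply. The rule is still second-order accurate for integrands
with a `K`-Lipschitz derivative: on a panel `[a, b]` the error `e(x) = (x - a)(f a + f x)/2 - ∫ₐˣ f`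
has `e'(x) = (f a - f x - (a - x) f' x)/2 = O(K (b - a)²)`, so `e(b) = O(K (b - a)³)`, and summing
over `N` panels of width `h = 1/N` gives `O(K h²)`. Multiplying by a `C²` weight `ψ` keeps the
derivative Lipschitz, with a constant independent of `t` because `G01` and its derivative are
bounded on the square. -/

theorem abs_sub_sub_mul_le_of_lipschitzOnWith_deriv {f f' : ℝ → ℝ} {s : Set ℝ} {K : ℝ≥0}
    (hs : Convex ℝ s) (hf : ∀ x ∈ s, HasDerivWithinAt f (f' x) s x)
    (hf' : LipschitzOnWith K f' s) {x y : ℝ} (hx : x ∈ s) (hy : y ∈ s) :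
    |f y - f x - (y - x) * f' x| ≤ K * (y - x) ^ 2 := by
  have hxy : uIcc x y ⊆ s := hs.ordConnected.uIcc_subset hx hy
  have hderiv : ∀ t ∈ uIcc x y,
      HasDerivWithinAt (fun t => f t - t * f' x) (f' t - f' x) (uIcc x y) t := fun t ht => by
    simpa using ((hf t (hxy ht)).mono hxy).fun_sub ((hasDerivWithinAt_id t _).mul_const (f' x))
  have hbound : ∀ t ∈ uIcc x y, ‖f' t - f' x‖ ≤ K * |y - x| := fun t ht =>
    calc ‖f' t - f' x‖ ≤ K * |t - x| := by
          simpa [Real.dist_eq] using hf'.dist_le_mul t (hxy ht) x hx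
      _ ≤ K * |y - x| := mul_le_mul_of_nonneg_left (abs_sub_left_of_mem_uIcc ht) K.coe_nonneg
  calc |f y - f x - (y - x) * f' x| = ‖(f y - y * f' x) - (f x - x * f' x)‖ := by
        rw [Real.norm_eq_abs]; ring_nf
    _ ≤ K * |y - x| * ‖y - x‖ := (convex_uIcc x y).norm_image_sub_le_of_norm_hasDerivWithin_le
        hderiv hbound left_mem_uIcc right_mem_uIcc
    _ = K * (y - x) ^ 2 := by rw [Real.norm_eq_abs, mul_assoc, abs_mul_abs_self, sq]

theorem abs_trapezoidal_error_one_le_of_lipschitzOnWith_deriv {f f' : ℝ → ℝ} {a b : ℝ}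
    {K : ℝ≥0} (hab : a ≤ b) (hf : ∀ x ∈ Icc a b, HasDerivWithinAt f (f' x) (Icc a b) x)
    (hf' : LipschitzOnWith K f' (Icc a b)) :
    |trapezoidal_error f 1 a b| ≤ K * (b - a) ^ 3 / 2 := by
  have hcont : ContinuousOn f (Icc a b) := fun x hx => (hf x hx).continuousWithinAt
  have hderiv : ∀ x ∈ Icc a b, HasDerivWithinAt (fun t => trapezoidal_error f 1 a t)
      ((f a - f x - (a - x) * f' x) / 2) (Icc a b) x := by
    intro x hx
    -- the `FTCFilter x (𝓝[Icc a b] x) _` instance needed below is found through this `Fact`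
    have := Fact.mk hx
    have hint : HasDerivWithinAt (fun u => ∫ t in a..u, f t) (f x) (Icc a b) x :=
      intervalIntegral.integral_hasDerivWithinAt_right
        ((hcont.mono (Icc_subset_Icc le_rfl hx.2)).intervalIntegrable_of_Icc hx.1)
        (hcont.stronglyMeasurableAtFilter_nhdsWithin measurableSet_Icc x) (hcont x hx)
    simp only [trapezoidal_error, trapezoidal_integral_one]
    refine ((((hasDerivWithinAt_id x _).sub_const a).div_const 2).fun_mul
      ((hf x hx).const_add (f a))).fun_sub hint |>.congr_deriv ?_
    simp only [id]
    ring
  have hbound : ∀ x ∈ Icc a b, ‖(f a - f x - (a - x) * f' x) / 2‖ ≤ K * (b - a) ^ 2 / 2 := by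
    intro x hx
    rw [Real.norm_eq_abs, abs_div, abs_two]
    gcongr
    calc _ ≤ K * (a - x) ^ 2 := abs_sub_sub_mul_le_of_lipschitzOnWith_deriv (convex_Icc a b)
          hf hf' hx (left_mem_Icc.2 hab)
      _ ≤ K * (b - a) ^ 2 := mul_le_mul_of_nonneg_left (by nlinarith [hx.1, hx.2]) K.coe_nonneg
  have := (convex_Icc a b).norm_image_sub_le_of_norm_hasDerivWithin_le hderiv hbound
    (left_mem_Icc.2 hab) (right_mem_Icc.2 hab)
  rw [trapezoidal_error_eq, sub_zero, Real.norm_eq_abs, Real.norm_eq_abs,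
    abs_of_nonneg (sub_nonneg.2 hab)] at this
  linarith

theorem abs_trapezoidal_error_le_of_lipschitzOnWith_deriv {f f' : ℝ → ℝ} {a b : ℝ}
    {K : ℝ≥0} (hab : a ≤ b) (hf : ∀ x ∈ Icc a b, HasDerivWithinAt f (f' x) (Icc a b) x)
    (hf' : LipschitzOnWith K f' (Icc a b)) {N : ℕ} (hN : 0 < N) :
    |trapezoidal_error f N a b| ≤ K * (b - a) * ((b - a) / N) ^ 2 / 2 := by
  set h := (b - a) / N with hh
  have hh0 : 0 ≤ h := div_nonneg (sub_nonneg.2 hab) N.cast_nonneg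
  have hb : b = a + N * h := by rw [hh]; field_simp; ring
  have hsub : ∀ k < N, Icc (a + k * h) (a + (k + 1) * h) ⊆ Icc a b := fun k hk => by
    have : (k : ℝ) + 1 ≤ N := by exact_mod_cast hk
    refine Icc_subset_Icc (by nlinarith [k.cast_nonneg (α := ℝ)]) ?_
    rw [hb]; nlinarith
  have hcont : ContinuousOn f (Icc a b) := fun x hx => (hf x hx).continuousWithinAt
  have hint : IntervalIntegrable f volume a b := hcont.intervalIntegrable_of_Icc hab
  conv_lhs => rw [hb, ← sum_trapezoidal_error_adjacent_intervals hN (hb ▸ hint)]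
  calc _ ≤ ∑ k ∈ Finset.range N, |trapezoidal_error f 1 (a + k * h) (a + (k + 1) * h)| :=
        Finset.abs_sum_le_sum_abs _ _
    _ ≤ ∑ k ∈ Finset.range N, K * h ^ 3 / 2 := Finset.sum_le_sum fun k hk => by
        have hk := hsub k (Finset.mem_range.1 hk)
        refine (abs_trapezoidal_error_one_le_of_lipschitzOnWith_deriv (by nlinarith)
          (fun x hx => (hf x (hk hx)).mono hk) (hf'.mono hk)).trans_eq ?_
        ring
    _ = K * (b - a) * h ^ 2 / 2 := by
        rw [Finset.sum_const, Finset.card_range, nsmul_eq_mul, hb]; ring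

theorem LipschitzOnWith.mul_of_norm_le {α R : Type*} [PseudoMetricSpace α] [SeminormedRing R]
    {u v : α → R} {s : Set α} {Ku Kv A B : ℝ≥0} (hu : LipschitzOnWith Ku u s)
    (hv : LipschitzOnWith Kv v s) (hA : ∀ x ∈ s, ‖u x‖ ≤ A) (hB : ∀ x ∈ s, ‖v x‖ ≤ B) :
    LipschitzOnWith (A * Kv + B * Ku) (fun x => u x * v x) s := by
  refine LipschitzOnWith.of_dist_le_mul fun x hx y hy => ?_
  have hux := hu.dist_le_mul x hx y hy
  have hvx := hv.dist_le_mul x hx y hy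
  rw [dist_eq_norm] at hux hvx ⊢
  calc ‖u x * v x - u y * v y‖ = ‖u x * (v x - v y) + (u x - u y) * v y‖ := by
        rw [mul_sub, sub_mul, add_sub_assoc', sub_add_cancel]
    _ ≤ ‖u x‖ * ‖v x - v y‖ + ‖u x - u y‖ * ‖v y‖ :=
        (norm_add_le _ _).trans (add_le_add (norm_mul_le _ _) (norm_mul_le _ _))
    _ ≤ A * (Kv * dist x y) + Ku * dist x y * B :=
        add_le_add (mul_le_mul (hA x hx) hvx (norm_nonneg _) A.coe_nonneg)
          (mul_le_mul hux (hB y hy) (norm_nonneg _) (by positivity))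
    _ = (A * Kv + B * Ku : ℝ≥0) * dist x y := by push_cast; ring

theorem HasDerivAt.ite_le {f g f' g' : ℝ → ℝ} {c x : ℝ} (hf : HasDerivAt f (f' x) x)
    (hg : HasDerivAt g (g' x) x) (hfg : f c = g c) (hfg' : f' c = g' c) :
    HasDerivAt (fun y => if y ≤ c then f y else g y) (if x ≤ c then f' x else g' x) x := by
  have hleft : HasDerivWithinAt (fun y => if y ≤ c then f y else g y)
      (if x ≤ c then f' x else g' x) (Iic c) x := by
    by_cases hx : x ≤ c
    · rw [if_pos hx]
      exact hf.hasDerivWithinAt.congr (fun y hy => if_pos hy) (if_pos hx)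
    · exact hasDerivWithinAt_iff_hasFDerivWithinAt.2
        (.of_notMem_closure (by rwa [closure_Iic, mem_Iic]))
  have hright : HasDerivWithinAt (fun y => if y ≤ c then f y else g y)
      (if x ≤ c then f' x else g' x) (Ici c) x := by
    by_cases hx : c ≤ x
    · have hgx : (if x ≤ c then f' x else g' x) = g' x := by
        split_ifs with h
        · rw [le_antisymm h hx, hfg']
        · rfl
      have hgy : ∀ y ∈ Ici c, (if y ≤ c then f y else g y) = g y := fun y hy => by
        split_ifs with h
        · rw [le_antisymm h hy, hfg]
        · rfl
      rw [hgx]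
      exact hg.hasDerivWithinAt.congr hgy (hgy x hx)
    · exact hasDerivWithinAt_iff_hasFDerivWithinAt.2
        (.of_notMem_closure (by rwa [closure_Ici, mem_Ici]))
  simpa [Iic_union_Ici] using hleft.union hright

theorem sum_trapWeight_mul_eq_trapezoidal_integral (f : ℝ → ℝ) {N : ℕ} (hN : 0 < N) :
    ∑ j ∈ Finset.range (N + 1), 1 / (N : ℝ) * trapWeight N j * f (j / N) =
      trapezoidal_integral f N 0 1 := by
  obtain ⟨M, rfl⟩ : ∃ M, N = M + 1 := ⟨N - 1, by omega⟩
  have hinterior : ∀ k ∈ Finset.range M,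
      1 / ((M + 1 : ℕ) : ℝ) * trapWeight (M + 1) (k + 1) * f ((k + 1 : ℕ) / (M + 1 : ℕ)) =
        1 / ((M + 1 : ℕ) : ℝ) * f (0 + (k + 1) * (1 - 0) / (M + 1 : ℕ)) := by
    intro k hk
    rw [trapWeight, if_neg (by simp only [Finset.mem_range] at hk; omega)]
    push_cast
    ring_nf
  rw [Finset.sum_range_succ, Finset.sum_range_succ', Finset.sum_congr rfl hinterior,
    ← Finset.mul_sum, trapezoidal_integral, Nat.add_sub_cancel, div_self (by positivity),
    trapWeight, trapWeight, if_pos (Or.inl rfl), if_pos (Or.inr rfl), Nat.cast_zero, zero_div]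
  ring

theorem abs_integral_sub_sum_trapWeight_le {f f' : ℝ → ℝ} {K : ℝ≥0}
    (hf : ∀ x ∈ Icc (0 : ℝ) 1, HasDerivWithinAt f (f' x) (Icc 0 1) x)
    (hf' : LipschitzOnWith K f' (Icc 0 1)) {N : ℕ} (hN : 0 < N) :
    |(∫ s in (0 : ℝ)..1, f s) -
        ∑ j ∈ Finset.range (N + 1), 1 / (N : ℝ) * trapWeight N j * f (j / N)| ≤
      K * (1 / (N : ℝ)) ^ 2 / 2 := by
  rw [sum_trapWeight_mul_eq_trapezoidal_integral f hN, abs_sub_comm]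
  simpa [trapezoidal_error] using
    abs_trapezoidal_error_le_of_lipschitzOnWith_deriv zero_le_one hf hf' hN

noncomputable def G01Deriv (t s : ℝ) : ℝ :=
  if s ≤ t then s + (t ^ 2 - 2 * t) / 2 else t ^ 2 / 2

theorem hasDerivAt_G01 (t s : ℝ) : HasDerivAt (G01 t) (G01Deriv t s) s := by
  have hleft : ∀ x, HasDerivAt (fun s : ℝ => s / 2 * (t ^ 2 - 2 * t + s))
      (x + (t ^ 2 - 2 * t) / 2) x := fun x => by
    refine (((hasDerivAt_id x).div_const 2).fun_mul
      ((hasDerivAt_id x).const_add (t ^ 2 - 2 * t))).congr_deriv ?_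
    simp only [id]
    ring
  have hright : ∀ x, HasDerivAt (fun s : ℝ => t ^ 2 / 2 * (s - 1)) (t ^ 2 / 2) x := fun x => by
    simpa using ((hasDerivAt_id x).sub_const 1).const_mul (t ^ 2 / 2)
  exact HasDerivAt.ite_le (f' := fun x => x + (t ^ 2 - 2 * t) / 2) (g' := fun _ => t ^ 2 / 2)
    (hleft s) (hright s) (by ring) (by ring)

theorem lipschitzWith_G01Deriv (t : ℝ) : LipschitzWith 1 (G01Deriv t) := by
  refine LipschitzWith.of_dist_le_mul fun x y => ?_
  simp only [G01Deriv, Real.dist_eq, NNReal.coe_one, one_mul]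
  split_ifs with hx hy hy <;> rw [abs_le] <;> constructor <;>
    linarith [le_abs_self (x - y), neg_abs_le (x - y)]

theorem G01_nonpos {t s : ℝ} (ht : t ∈ Icc (0 : ℝ) 1) (hs : s ∈ Icc (0 : ℝ) 1) : G01 t s ≤ 0 := by
  obtain ⟨ht0, ht1⟩ := ht
  obtain ⟨hs0, hs1⟩ := hs
  unfold G01
  split_ifs with h
  · exact mul_nonpos_of_nonneg_of_nonpos (by positivity) (by nlinarith)
  · exact mul_nonpos_of_nonneg_of_nonpos (by positivity) (by linarith)

theorem abs_G01_le {t s : ℝ} (ht : t ∈ Icc (0 : ℝ) 1) (hs : s ∈ Icc (0 : ℝ) 1) :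
    |G01 t s| ≤ 1 / 2 := by
  obtain ⟨ht0, ht1⟩ := ht
  obtain ⟨hs0, hs1⟩ := hs
  unfold G01
  split_ifs with h <;> rw [abs_le] <;> constructor <;> nlinarith

theorem abs_G01Deriv_le {t s : ℝ} (ht : t ∈ Icc (0 : ℝ) 1) (hs : s ∈ Icc (0 : ℝ) 1) :
    |G01Deriv t s| ≤ 1 / 2 := by
  obtain ⟨ht0, ht1⟩ := ht
  obtain ⟨hs0, hs1⟩ := hs
  unfold G01Deriv
  split_ifs with h <;> rw [abs_le] <;> constructor <;> nlinarith

theorem hasDerivWithinAt_abs_G01 {t s : ℝ} (ht : t ∈ Icc (0 : ℝ) 1) (hs : s ∈ Icc (0 : ℝ) 1) :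
    HasDerivWithinAt (fun s => |G01 t s|) (-G01Deriv t s) (Icc 0 1) s :=
  (hasDerivAt_G01 t s).neg.hasDerivWithinAt.congr
    (fun _ hy => abs_of_nonpos (G01_nonpos ht hy)) (abs_of_nonpos (G01_nonpos ht hs))

theorem exists_lipschitzOnWith_deriv_abs_G01_mul {ψ ψ' : ℝ → ℝ} {L : ℝ≥0}
    (hψ : ∀ x ∈ Icc (0 : ℝ) 1, HasDerivWithinAt ψ (ψ' x) (Icc 0 1) x)
    (hψ' : LipschitzOnWith L ψ' (Icc 0 1)) :
    ∃ K : ℝ≥0, ∀ t ∈ Icc (0 : ℝ) 1,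
      LipschitzOnWith K (fun s => -G01Deriv t s * ψ s + |G01 t s| * ψ' s) (Icc 0 1) := by
  obtain ⟨A, hA⟩ := isCompact_Icc.exists_bound_of_continuousOn
    (fun x hx => (hψ x hx).continuousWithinAt)
  obtain ⟨B, hB⟩ := isCompact_Icc.exists_bound_of_continuousOn hψ'.continuousOn
  have hψ_lip : LipschitzOnWith B.toNNReal ψ (Icc 0 1) :=
    (convex_Icc 0 1).lipschitzOnWith_of_nnnorm_hasDerivWithin_le hψ fun x hx => by
      rw [← NNReal.coe_le_coe, coe_nnnorm]; exact (hB x hx).trans (Real.le_coe_toNNReal B)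
  refine ⟨1 / 2 * B.toNNReal + A.toNNReal * 1 + (1 / 2 * L + B.toNNReal * (1 / 2)),
    fun t ht => ?_⟩
  have hG_lip : LipschitzOnWith (1 / 2) (fun s => |G01 t s|) (Icc 0 1) :=
    (convex_Icc 0 1).lipschitzOnWith_of_nnnorm_hasDerivWithin_le
      (fun x hx => hasDerivWithinAt_abs_G01 ht hx) fun x hx => by
        rw [← NNReal.coe_le_coe, coe_nnnorm, Real.norm_eq_abs, abs_neg]
        exact_mod_cast abs_G01Deriv_le ht hx
  refine LipschitzOnWith.add ?_ ?_
  · refine (lipschitzWith_G01Deriv t).neg.lipschitzOnWith.mul_of_norm_le hψ_lip ?_ ?_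
    · intro x hx
      rw [Real.norm_eq_abs, Pi.neg_apply, abs_neg]
      exact_mod_cast abs_G01Deriv_le ht hx
    · exact fun x hx => (hA x hx).trans (Real.le_coe_toNNReal A)
  · refine hG_lip.mul_of_norm_le hψ' ?_ ?_
    · intro x hx
      rw [Real.norm_eq_abs, abs_abs]
      exact_mod_cast abs_G01_le ht hx
    · exact fun x hx => (hB x hx).trans (Real.le_coe_toNNReal B)

/-- For twice continuously differentiable `ψ` on `[0,1]`, the composite trapezoidal rule
applied to `s ↦ |G(ξ, s)| ψ(s)` has error `O(h²)` uniformly in `N` and in `ξ ∈ [0,1]`; in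
particular (taking `ψ ≡ 1`) the trapezoidal sums of `|G(ξ, ·)|` are bounded by
`max_{t∈[0,1]} ∫₀¹ |G(t,s)| ds + C h²`. -/
theorem trapezoidal_rule_abs_green_kernel
    (ψ : ℝ → ℝ) (hψ : ContDiffOn ℝ 2 ψ (Icc 0 1)) :
    ∃ C > (0:ℝ),
      (∀ N : ℕ, 1 ≤ N → ∀ ξ ∈ Icc (0:ℝ) 1,
        |(∫ s in (0:ℝ)..1, |G01 ξ s| * ψ s)
            - ∑ j ∈ Finset.range (N + 1),
                (1 / (N:ℝ)) * trapWeight N j * |G01 ξ ((j : ℝ) / N)| * ψ ((j : ℝ) / N)|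
          ≤ C * (1 / (N:ℝ)) ^ 2) ∧
      (∀ M0 : ℝ,
        IsGreatest ((fun t => ∫ s in (0:ℝ)..1, |G01 t s|) '' Icc 0 1) M0 →
        ∀ N : ℕ, 1 ≤ N → ∀ ξ ∈ Icc (0:ℝ) 1,
          (∑ j ∈ Finset.range (N + 1), (1 / (N:ℝ)) * trapWeight N j * |G01 ξ ((j : ℝ) / N)|)
            ≤ M0 + C * (1 / (N:ℝ)) ^ 2) := by
  have hderiv : ∀ x ∈ Icc (0 : ℝ) 1, HasDerivWithinAt ψ (derivWithin ψ (Icc 0 1) x) (Icc 0 1) x :=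
    fun x hx => (hψ.differentiableOn two_ne_zero x hx).hasDerivWithinAt
  obtain ⟨L, hL⟩ := (hψ.derivWithin (uniqueDiffOn_Icc zero_lt_one) le_rfl).exists_lipschitzOnWith
    one_ne_zero (convex_Icc 0 1) isCompact_Icc
  obtain ⟨K, hK⟩ := exists_lipschitzOnWith_deriv_abs_G01_mul hderiv hL
  have hh : ∀ N : ℕ, 0 ≤ (1 / (N : ℝ)) ^ 2 := fun N => by positivity
  refine ⟨K + 1, by positivity, fun N hN ξ hξ => ?_, fun M0 hM0 N hN ξ hξ => ?_⟩
  · have herr := abs_integral_sub_sum_trapWeight_le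
      (fun x hx => (hasDerivWithinAt_abs_G01 hξ hx).fun_mul (hderiv x hx)) (hK ξ hξ) hN
    simp only [mul_assoc] at herr ⊢
    nlinarith [hh N, K.coe_nonneg]
  · have herr := abs_integral_sub_sum_trapWeight_le (fun x hx => hasDerivWithinAt_abs_G01 hξ hx)
      (lipschitzWith_G01Deriv ξ).neg.lipschitzOnWith hN
    rw [NNReal.coe_one] at herr
    have hmax : ∫ s in (0 : ℝ)..1, |G01 ξ s| ≤ M0 := hM0.2 ⟨ξ, hξ, rfl⟩
    nlinarith [abs_le.1 herr, hh N, K.coe_nonneg]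
end
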